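/- (Theorem 1, case i_1 = 1.) Assume no two ghost positions are consecutive, i.e. ι k + 1 < ι (k+1) for all k with k + 1 ≤ m − 1, and assume ι 0 = 1. Then for every v : ℝ and every w : ℕ → ℝ there exists a multivariate polynomial p : MvPolynomial (Fin (n+m)) ℝ with total degree at most 2*m − 1 such that for every choice of input bits b : ℕ → ℤ with b k ∈ {0,1} for all k and every c implementing the m-plus-bits interface for b, one has v + ∑_{i=1}^{n} w i * (φ* i : ℝ) = MvPolynomial.eval (fun t : Fin (n+m) => ((φ (t + 1)) : ℝ)) p. -/

import Mathlib

/-!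
Write `x k = 2 * b k - 1 ∈ {±1}`, so that `φ j = ∏_{k ≥ j} x k` and `x k = φ k * φ (k + 1)`.
The interface says that `c` is `b` with the ghost positions deleted: `c i = b (s i)`, where
`s i = Nat.nth (· ∉ ghosts) i` is the `i`-th non-ghost position. Hence `φ* i` is the product of
`x k` over the non-ghost `k ≥ s i`, which, as `x k * x k = 1`, is `φ (s i)` times the product of
`x g = φ g * φ (g + 1)` over the ghosts `g > s i`. The ghost `ι 0 = 1` lies below `s i`, so at
most `m - 1` ghosts contribute and `φ* i` is a monomial of degree at most `2 * m - 1` in the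
observable features.
-/

/-- `c` implements the `m`-plus-bits challenge interface for input bits `b`,
with ghost-bit positions `ι 0 < ι 1 < ... < ι (m-1)`, for an `n`-stage PUF. -/
def MPlusBitsInterface (n m : ℕ) (hm : 1 ≤ m) (ι : Fin m → ℕ)
    (b c : ℕ → ℤ) : Prop :=
  (∀ i, 1 ≤ i → i < ι ⟨0, hm⟩ → c i = b i) ∧
  (∀ k (hk : k + 1 ≤ m - 1), ∀ i,
    ι ⟨k, by omega⟩ < i → i < ι ⟨k + 1, by omega⟩ → c (i - (k + 1)) = b i) ∧
  (∀ i, ι ⟨m - 1, by omega⟩ < i → i ≤ n + m → c (i - m) = b i)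

open Finset MvPolynomial

section SignProducts

variable {M : Type*} [CommMonoid M] {x : ℕ → M}

theorem prod_mul_prod_self_eq_one (hx : ∀ k, x k * x k = 1) (s : Finset ℕ) :
    (∏ k ∈ s, x k) * ∏ k ∈ s, x k = 1 := by
  rw [← prod_mul_distrib]
  exact prod_eq_one fun k _ => hx k

theorem prod_Icc_mul_prod_Icc_add_one (hx : ∀ k, x k * x k = 1) {j N : ℕ} (hj : j ≤ N) :
    (∏ k ∈ Icc j N, x k) * ∏ k ∈ Icc (j + 1) N, x k = x j := by
  rw [← insert_Icc_add_one_left_eq_Icc hj, prod_insert (by simp), mul_assoc,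
    prod_mul_prod_self_eq_one hx, mul_one]

theorem prod_Icc_filter_notMem (hx : ∀ k, x k * x k = 1) {G : Finset ℕ} {s N : ℕ}
    (hs : s ∉ G) (hG : ∀ g ∈ G, g ≤ N) :
    ∏ j ∈ Icc s N with j ∉ G, x j =
      (∏ k ∈ Icc s N, x k) *
        ∏ g ∈ G with s < g, (∏ k ∈ Icc g N, x k) * ∏ k ∈ Icc (g + 1) N, x k := by
  have hghosts : {j ∈ Icc s N | ¬j ∉ G} = {g ∈ G | s < g} := by
    ext g
    simp only [mem_filter, mem_Icc, not_not]
    constructor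
    · rintro ⟨⟨hsg, -⟩, hg⟩
      exact ⟨hg, lt_of_le_of_ne hsg (by rintro rfl; exact hs hg)⟩
    · rintro ⟨hg, hsg⟩
      exact ⟨⟨hsg.le, hG g hg⟩, hg⟩
  rw [prod_congr rfl fun g hg => prod_Icc_mul_prod_Icc_add_one hx (hG g (mem_filter.1 hg).1),
    ← hghosts, ← prod_filter_mul_prod_filter_not (Icc s N) (· ∉ G), mul_assoc,
    prod_mul_prod_self_eq_one hx, mul_one]

end SignProducts

section Enumeration

variable (G : Finset ℕ)

theorem infinite_setOf_notMem : (Set.ofPred (· ∉ G)).Infinite :=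
  G.finite_toSet.infinite_compl

theorem le_nth_notMem (i : ℕ) : i ≤ Nat.nth (· ∉ G) i :=
  (Nat.nth_strictMono (infinite_setOf_notMem G)).id_le i

theorem prod_Icc_eq_prod_filter_notMem {M : Type*} [CommMonoid M] (f : ℕ → M) {i n N : ℕ}
    (hN : Nat.count (· ∉ G) (N + 1) = n + 1) :
    ∏ t ∈ Icc i n, f t = ∏ j ∈ Icc (Nat.nth (· ∉ G) i) N with j ∉ G, f (Nat.count (· ∉ G) j) := by
  have hinf := infinite_setOf_notMem G
  refine prod_nbij' (Nat.nth (· ∉ G)) (Nat.count (· ∉ G)) ?_ ?_ ?_ ?_ ?_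
  · intro t ht
    rw [mem_Icc] at ht
    have := Nat.nth_lt_of_lt_count (p := (· ∉ G)) (n := N + 1) (k := t) (by omega)
    simp only [mem_filter, mem_Icc]
    exact ⟨⟨Nat.nth_monotone hinf ht.1, by omega⟩, Nat.nth_mem_of_infinite hinf t⟩
  · intro j hj
    simp only [mem_filter, mem_Icc] at hj
    have := Nat.count_strict_mono (p := (· ∉ G)) hj.2 (Nat.lt_add_one_of_le hj.1.2)
    rw [mem_Icc, ← Nat.count_nth_of_infinite hinf i]
    exact ⟨Nat.count_monotone _ hj.1.1, by omega⟩
  · exact fun t _ => Nat.count_nth_of_infinite hinf t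
  · exact fun j hj => Nat.nth_count (mem_filter.1 hj).2
  · intro t _
    rw [Nat.count_nth_of_infinite hinf]

end Enumeration

section GhostPositions

variable {m : ℕ} {ι : Fin m → ℕ}

theorem lt_card_filter_lt_iff (hι : Monotone ι) (l : Fin m) (j : ℕ) :
    ι l < j ↔ (l : ℕ) < #{l' | ι l' < j} := by
  constructor
  · intro h
    have hsub : Iic l ⊆ ({l' | ι l' < j} : Finset (Fin m)) := fun l' hl' => by
      simp only [mem_Iic, mem_filter, mem_univ, true_and] at hl' ⊢
      exact (hι hl').trans_lt h
    have := card_le_card hsub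
    rw [Fin.card_Iic] at this
    omega
  · intro h
    by_contra! h'
    have hsub : ({l' | ι l' < j} : Finset (Fin m)) ⊆ Iio l := fun l' hl' => by
      simp only [mem_Iio, mem_filter, mem_univ, true_and] at hl' ⊢
      by_contra! hl
      exact absurd (hι hl) (by omega)
    have := card_le_card hsub
    rw [Fin.card_Iio] at this
    omega

theorem count_notMem_image (hι : Function.Injective ι) (j : ℕ) :
    Nat.count (· ∉ univ.image ι) j = j - #{l | ι l < j} := by
  have hghosts : ({x ∈ range j | x ∈ univ.image ι} : Finset ℕ) =
      ({l | ι l < j} : Finset (Fin m)).image ι := by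
    ext x
    simp only [mem_filter, mem_range, mem_image, mem_univ, true_and]
    constructor
    · rintro ⟨hx, l, rfl⟩
      exact ⟨l, hx, rfl⟩
    · rintro ⟨l, hl, rfl⟩
      exact ⟨hl, l, rfl⟩
  have hsplit := card_filter_add_card_filter_not (s := range j) (· ∈ univ.image ι)
  rw [hghosts, card_image_of_injective _ hι, card_range] at hsplit
  rw [Nat.count_eq_card_filter_range]
  omega

theorem count_notMem_image_add_one (hι : Function.Injective ι) {n : ℕ} (hN : ∀ l, ι l ≤ n + m) :
    Nat.count (· ∉ univ.image ι) (n + m + 1) = n + 1 := by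
  rw [count_notMem_image hι, filter_true_of_mem fun l _ => Nat.lt_add_one_of_le (hN l), card_univ,
    Fintype.card_fin]
  omega

theorem card_filter_image_lt {s : ℕ} (l : Fin m) (hl : ι l ≤ s) :
    #{g ∈ univ.image ι | s < g} < m :=
  calc #{g ∈ univ.image ι | s < g}
      < #(univ.image ι) :=
        card_lt_card (filter_ssubset.2 ⟨ι l, mem_image_of_mem ι (mem_univ l), by omega⟩)
    _ ≤ m := card_image_le.trans_eq (card_fin m)

theorem nth_notMem_image_mem_Icc (hι : StrictMono ι) {n i : ℕ} (hN : ∀ l, ι l ≤ n + m)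
    (hi : i ∈ Icc 1 n) : Nat.nth (· ∉ univ.image ι) i ∈ Icc 1 (n + m) := by
  rw [mem_Icc] at hi ⊢
  have := Nat.nth_lt_of_lt_count (p := (· ∉ univ.image ι)) (n := n + m + 1) (k := i)
    (by rw [count_notMem_image_add_one hι.injective hN]; omega)
  exact ⟨hi.1.trans (le_nth_notMem _ i), by omega⟩

theorem MPlusBitsInterface.apply_count_eq {n : ℕ} {hm : 1 ≤ m} {b c : ℕ → ℤ}
    (h : MPlusBitsInterface n m hm ι b c) (hι : StrictMono ι) {j : ℕ} (hj1 : 1 ≤ j)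
    (hjN : j ≤ n + m) (hj : j ∉ univ.image ι) :
    c (Nat.count (· ∉ univ.image ι) j) = b j := by
  obtain ⟨before, between, after⟩ := h
  have hne : ∀ l, ι l ≠ j := by simpa using hj
  have hlt := lt_card_filter_lt_iff hι.monotone (j := j)
  have hKm : #{l | ι l < j} ≤ m := (card_filter_le _ _).trans_eq (card_fin m)
  rw [count_notMem_image hι.injective]
  by_cases hK : #{l | ι l < j} = 0
  · have := (hlt ⟨0, hm⟩).not.2 (by omega)
    rw [hK, Nat.sub_zero]
    exact before j hj1 (lt_of_le_of_ne (not_lt.1 this) (hne _).symm)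
  · obtain ⟨k, hK⟩ := Nat.exists_eq_add_one_of_ne_zero hK
    rw [hK]
    obtain hkm | rfl := (show k + 1 ≤ m by omega).lt_or_eq
    · have := (hlt ⟨k + 1, hkm⟩).not.2 (by simp [hK])
      exact between k (by omega) j ((hlt _).2 (by simp [hK]))
        (lt_of_le_of_ne (not_lt.1 this) (hne _).symm)
    · exact after j ((hlt _).2 (by simp [hK])) hjN

end GhostPositions

theorem totalDegree_C_add_sum_C_mul_le {R σ κ : Type*} [CommSemiring R] (v : R) (s : Finset κ)
    (w : κ → R) (p : κ → MvPolynomial σ R) {d : ℕ} (hp : ∀ i ∈ s, (p i).totalDegree ≤ d) :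
    (C v + ∑ i ∈ s, C (w i) * p i).totalDegree ≤ d := by
  refine (totalDegree_add _ _).trans (max_le (by simp) ((totalDegree_finsetSum _ _).trans
    (Finset.sup_le fun i hi => ?_)))
  calc (C (w i) * p i).totalDegree ≤ 0 + (p i).totalDegree :=
        (totalDegree_mul _ _).trans (add_le_add_left (totalDegree_C _).le _)
    _ ≤ d := by rw [zero_add]; exact hp i hi

section FeaturePolynomials

variable {R : Type*} [CommSemiring R] (N : ℕ)

/-- The variable `t : Fin N` stands for `φ (t + 1)`; `φ (N + 1)` is an empty product, hence `1`. -/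
noncomputable def featureVar (j : ℕ) : MvPolynomial (Fin N) R :=
  if h : 1 ≤ j ∧ j ≤ N then X ⟨j - 1, by omega⟩ else 1

theorem totalDegree_featureVar_le (j : ℕ) : (featureVar (R := R) N j).totalDegree ≤ 1 := by
  unfold featureVar
  split
  · exact (totalDegree_monomial_le _ _).trans_eq (by simp)
  · simp

theorem eval_featureVar {f : ℕ → R} (hf : f (N + 1) = 1) {j : ℕ} (h1 : 1 ≤ j) (h2 : j ≤ N + 1) :
    eval (fun t : Fin N => f (t + 1)) (featureVar N j) = f j := by
  unfold featureVar
  split_ifs with h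
  · rw [eval_X, Nat.sub_add_cancel h1]
  · obtain rfl : j = N + 1 := by omega
    rw [map_one, hf]

noncomputable def hiddenFeaturePoly (G : Finset ℕ) (s : ℕ) : MvPolynomial (Fin N) R :=
  featureVar N s * ∏ g ∈ G with s < g, featureVar N g * featureVar N (g + 1)

theorem totalDegree_hiddenFeaturePoly_le (G : Finset ℕ) (s : ℕ) :
    (hiddenFeaturePoly (R := R) N G s).totalDegree ≤ 1 + 2 * #{g ∈ G | s < g} := by
  have hfactor : ∀ g, (featureVar (R := R) N g * featureVar N (g + 1)).totalDegree ≤ 2 := fun g =>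
    (totalDegree_mul _ _).trans
      (add_le_add (totalDegree_featureVar_le N g) (totalDegree_featureVar_le N (g + 1)))
  have hprod := (totalDegree_finsetProd {g ∈ G | s < g}
    fun g => featureVar (R := R) N g * featureVar N (g + 1)).trans
    (sum_le_card_nsmul _ _ _ fun g _ => hfactor g)
  have := (totalDegree_mul (featureVar (R := R) N s) _).trans
    (add_le_add (totalDegree_featureVar_le N s) hprod)
  rw [smul_eq_mul] at this
  exact this.trans_eq (by ring)

theorem eval_hiddenFeaturePoly {f : ℕ → R} (hf : f (N + 1) = 1) {G : Finset ℕ} {s : ℕ}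
    (hs1 : 1 ≤ s) (hsN : s ≤ N) (hG : ∀ g ∈ G, g ≤ N) :
    eval (fun t : Fin N => f (t + 1)) (hiddenFeaturePoly N G s) =
      f s * ∏ g ∈ G with s < g, f g * f (g + 1) := by
  rw [hiddenFeaturePoly, eval_mul, eval_prod, eval_featureVar N hf hs1 (by omega)]
  refine congrArg _ (prod_congr rfl fun g hg => ?_)
  obtain ⟨hgG, hsg⟩ := mem_filter.1 hg
  have := hG g hgG
  rw [eval_mul, eval_featureVar N hf (j := g) (by omega) (by omega),
    eval_featureVar N hf (j := g + 1) (by omega) (by omega)]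

end FeaturePolynomials

section HiddenFeatures

variable {n m : ℕ} {hm : 1 ≤ m} {ι : Fin m → ℕ} {b c : ℕ → ℤ}

theorem MPlusBitsInterface.prod_Icc_eq (hI : MPlusBitsInterface n m hm ι b c) (hι : StrictMono ι)
    (hlast : ∀ l, ι l ≤ n + m) (hb : ∀ k, b k = 0 ∨ b k = 1) {i : ℕ} (hi : 1 ≤ i) :
    ∏ k ∈ Icc i n, (2 * c k - 1) =
      (∏ k ∈ Icc (Nat.nth (· ∉ univ.image ι) i) (n + m), (2 * b k - 1)) *
        ∏ g ∈ univ.image ι with Nat.nth (· ∉ univ.image ι) i < g,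
          (∏ k ∈ Icc g (n + m), (2 * b k - 1)) * ∏ k ∈ Icc (g + 1) (n + m), (2 * b k - 1) := by
  set G := univ.image ι
  have hG : ∀ g ∈ G, g ≤ n + m := by simpa [G] using hlast
  have hsq : ∀ k, (2 * b k - 1) * (2 * b k - 1) = 1 := fun k => by
    rcases hb k with h | h <;> simp [h]
  rw [prod_Icc_eq_prod_filter_notMem G _ (count_notMem_image_add_one hι.injective hlast),
    ← prod_Icc_filter_notMem hsq (Nat.nth_mem_of_infinite (infinite_setOf_notMem G) i) hG]
  refine prod_congr rfl fun j hj => ?_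
  obtain ⟨⟨hsj, hjN⟩, hjG⟩ : (_ ∧ _) ∧ _ := by simpa only [mem_filter, mem_Icc] using hj
  rw [hI.apply_count_eq hι ((hi.trans (le_nth_notMem G i)).trans hsj) hjN hjG]

end HiddenFeatures

/-- Theorem 1, case i₁ = 1: if no two ghost positions are
consecutive, the argument of the sign function in the APUF response model is,
as a function of the observable feature vector `(φ(1), ..., φ(n+m))`, given by
a multivariate polynomial of total degree at most `2m - 1` (case `i₁ = 1`). -/
theorem stmt7 (n m : ℕ) (hm : 1 ≤ m)
    (ι : Fin m → ℕ) (hmono : StrictMono ι)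
    (hlast : ι ⟨m - 1, by omega⟩ ≤ n + m)
    (hfirst1 : ι ⟨0, hm⟩ = 1) :
    ∀ (v : ℝ) (w : ℕ → ℝ),
      ∃ p : MvPolynomial (Fin (n + m)) ℝ,
        p.totalDegree ≤ 2 * m - 1 ∧
        ∀ (b c : ℕ → ℤ), (∀ k, b k = 0 ∨ b k = 1) →
          MPlusBitsInterface n m hm ι b c →
          v + ∑ i ∈ Finset.Icc 1 n,
              w i * ((∏ k ∈ Finset.Icc i n, (2 * c k - 1) : ℤ) : ℝ)
            = MvPolynomial.eval
                (fun t : Fin (n + m) =>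
                  ((∏ k ∈ Finset.Icc ((t : ℕ) + 1) (n + m), (2 * b k - 1) : ℤ) : ℝ))
                p := by
  intro v w
  set G := univ.image ι
  have hle : ∀ l, ι l ≤ n + m := fun l => (hmono.monotone (Fin.mk_le_mk.2 (by omega))).trans hlast
  have hG : ∀ g ∈ G, g ≤ n + m := by simpa [G] using hle
  have hs := fun i (hi : i ∈ Icc 1 n) => mem_Icc.1 (nth_notMem_image_mem_Icc hmono hle hi)
  refine ⟨C v + ∑ i ∈ Icc 1 n, C (w i) * hiddenFeaturePoly (n + m) G (Nat.nth (· ∉ G) i), ?_, ?_⟩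
  · refine totalDegree_C_add_sum_C_mul_le _ _ _ _ fun i hi => ?_
    have hcard : #{g ∈ G | Nat.nth (· ∉ G) i < g} < m :=
      card_filter_image_lt ⟨0, hm⟩ (hfirst1.trans_le (hs i hi).1)
    have := totalDegree_hiddenFeaturePoly_le (R := ℝ) (n + m) G (Nat.nth (· ∉ G) i)
    omega
  · intro b c hb hI
    rw [eval_add, eval_C, map_sum]
    refine congrArg _ (sum_congr rfl fun i hi => ?_)
    rw [eval_mul, eval_C, hI.prod_Icc_eq hmono hle hb (mem_Icc.1 hi).1,
      eval_hiddenFeaturePoly (f := fun j => ((∏ k ∈ Icc j (n + m), (2 * b k - 1) : ℤ) : ℝ))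
        _ (by simp) (hs i hi).1 (hs i hi).2 hG]
    push_cast
    rfl
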